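/- In the same inapproximability-reduction instance I', if there is a weakly popular matching of size at least (5/2)n − k (with k ≥ n/2), then G has a maximal matching of size at most k. -/

import Mathlib

open Finset
open scoped Classical
noncomputable section

/-- A bipartite preference instance: bipartite (multi)graph `G=(U,W;E)` where each
edge `e` has endpoints `src e ∈ U`, `dst e ∈ W`, and every vertex has a preference
valuation over edges (only values on incident edges are relevant); the valuation of
being unmatched (`∅`) is `0`. -/
structure PrefInst (U W E : Type) where
  src : E → U
  dst : E → W
  pU : U → E → ℝ
  pW : W → E → ℝ

namespace PrefInst

variable {U W E : Type} [DecidableEq U] [DecidableEq W] [DecidableEq E]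

/-- `M` is a matching: no two distinct edges of `M` share an endpoint. -/
def IsMatching (I : PrefInst U W E) (M : Finset E) : Prop :=
  ∀ e ∈ M, ∀ f ∈ M, e ≠ f → I.src e ≠ I.src f ∧ I.dst e ≠ I.dst f

/-- The edge of `M` incident to `u ∈ U` (if any): `M(u)`. -/
def mU (I : PrefInst U W E) (M : Finset E) (u : U) : Option E :=
  (M.filter fun e => I.src e = u).toList.head?

/-- The edge of `M` incident to `w ∈ W` (if any): `M(w)`. -/
def mW (I : PrefInst U W E) (M : Finset E) (w : W) : Option E :=
  (M.filter fun e => I.dst e = w).toList.head?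

/-- Valuation by `u` of a possible partner edge, with `p_u(∅) = 0`. -/
def valU (I : PrefInst U W E) (u : U) : Option E → ℝ
  | none => 0
  | some e => I.pU u e

def valW (I : PrefInst U W E) (w : W) : Option E → ℝ
  | none => 0
  | some e => I.pW w e

/-- `M` is maximal: no edge can be added keeping it a matching. -/
def Maximal (I : PrefInst U W E) (M : Finset E) : Prop :=
  ∀ e ∉ M, ¬ I.IsMatching (insert e M)

/-- Edge `e ∉ M` blocks `M` in the weak-stability sense: both endpoints strictly improve. -/
def Blocks (I : PrefInst U W E) (M : Finset E) (e : E) : Prop :=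
  e ∉ M ∧ I.valU (I.src e) (I.mU M (I.src e)) < I.pU (I.src e) e ∧
    I.valW (I.dst e) (I.mW M (I.dst e)) < I.pW (I.dst e) e

/-- Weak stability: no blocking edge. -/
def WeaklyStable (I : PrefInst U W E) (M : Finset E) : Prop :=
  ∀ e, ¬ I.Blocks M e

/-- Edge `e ∉ M` γ-min blocks `M`: both endpoints improve by at least their γ-threshold. -/
def GBlocks (I : PrefInst U W E) (γU γW : E → ℝ) (M : Finset E) (e : E) : Prop :=
  e ∉ M ∧ I.valU (I.src e) (I.mU M (I.src e)) + γU e ≤ I.pU (I.src e) e ∧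
    I.valW (I.dst e) (I.mW M (I.dst e)) + γW e ≤ I.pW (I.dst e) e

/-- γ-min stability: no γ-min blocking edge. -/
def GMinStable (I : PrefInst U W E) (γU γW : E → ℝ) (M : Finset E) : Prop :=
  ∀ e, ¬ I.GBlocks γU γW M e

/-- Standard vote of `u` comparing `M` to `N`: `+1` if strictly better in `M`,
`-1` if strictly better in `N`, `0` on equal value. -/
def sVoteU (I : PrefInst U W E) (M N : Finset E) (u : U) : ℤ :=
  if I.valU u (I.mU M u) = I.valU u (I.mU N u) then 0
  else if I.valU u (I.mU M u) < I.valU u (I.mU N u) then -1 else 1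

def sVoteW (I : PrefInst U W E) (M N : Finset E) (w : W) : ℤ :=
  if I.valW w (I.mW M w) = I.valW w (I.mW N w) then 0
  else if I.valW w (I.mW M w) < I.valW w (I.mW N w) then -1 else 1

/-- Weak vote of `u`: `0` if same partner, `-1` on strict improvement in `N`,
`+1` otherwise (partner changed without strict improvement). -/
def wVoteU (I : PrefInst U W E) (M N : Finset E) (u : U) : ℤ :=
  if I.mU M u = I.mU N u then 0
  else if I.valU u (I.mU M u) < I.valU u (I.mU N u) then -1 else 1

def wVoteW (I : PrefInst U W E) (M N : Finset E) (w : W) : ℤ :=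
  if I.mW M w = I.mW N w then 0
  else if I.valW w (I.mW M w) < I.valW w (I.mW N w) then -1 else 1

/-- Super vote of `u`: `0` if same partner, `-1` if the new partner is weakly
preferred (and different), `+1` only on strict worsening. -/
def supVoteU (I : PrefInst U W E) (M N : Finset E) (u : U) : ℤ :=
  if I.mU M u = I.mU N u then 0
  else if I.valU u (I.mU M u) ≤ I.valU u (I.mU N u) then -1 else 1

def supVoteW (I : PrefInst U W E) (M N : Finset E) (w : W) : ℤ :=
  if I.mW M w = I.mW N w then 0
  else if I.valW w (I.mW M w) ≤ I.valW w (I.mW N w) then -1 else 1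

/-- γ-vote of `u`: `0` if same partner; `-1` if `p_u(N(u)) ≥ p_u(M(u)) + γ_{N(u)}^u`;
`+1` otherwise (partner changed without a γ-sized improvement). -/
def gVoteU (I : PrefInst U W E) (γU : E → ℝ) (M N : Finset E) (u : U) : ℤ :=
  if I.mU M u = I.mU N u then 0
  else match I.mU N u with
    | none => 1
    | some e => if I.valU u (I.mU M u) + γU e ≤ I.pU u e then -1 else 1

def gVoteW (I : PrefInst U W E) (γW : E → ℝ) (M N : Finset E) (w : W) : ℤ :=
  if I.mW M w = I.mW N w then 0
  else match I.mW N w with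
    | none => 1
    | some e => if I.valW w (I.mW M w) + γW e ≤ I.pW w e then -1 else 1

variable [Fintype U] [Fintype W]

/-- Popularity (standard votes): `M` never loses a head-to-head comparison. -/
def Popular (I : PrefInst U W E) (M : Finset E) : Prop :=
  ∀ N, I.IsMatching N → 0 ≤ (∑ u, I.sVoteU M N u) + ∑ w, I.sVoteW M N w

/-- Weak popularity. -/
def WeaklyPopular (I : PrefInst U W E) (M : Finset E) : Prop :=
  ∀ N, I.IsMatching N → 0 ≤ (∑ u, I.wVoteU M N u) + ∑ w, I.wVoteW M N w

/-- Super popularity. -/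
def SuperPopular (I : PrefInst U W E) (M : Finset E) : Prop :=
  ∀ N, I.IsMatching N → 0 ≤ (∑ u, I.supVoteU M N u) + ∑ w, I.supVoteW M N w

/-- γ-popularity. -/
def GammaPopular (I : PrefInst U W E) (γU γW : E → ℝ) (M : Finset E) : Prop :=
  ∀ N, I.IsMatching N → 0 ≤ (∑ u, I.gVoteU γU M N u) + ∑ w, I.gVoteW γW M N w

end PrefInst
end

namespace PrefInst

/-- `K` is a maximal matching of the bipartite graph `G ⊆ U × W` (given as a
finite set of pairs): it is a matching contained in `G` to which no pair of `G`
can be added. -/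
def IsMaximalMatchingOf {α β : Type} [DecidableEq α] [DecidableEq β]
    (G K : Finset (α × β)) : Prop :=
  K ⊆ G ∧ (∀ p ∈ K, ∀ q ∈ K, p ≠ q → p.1 ≠ q.1 ∧ p.2 ≠ q.2) ∧
    ∀ p ∈ G, ∃ q ∈ K, q.1 = p.1 ∨ q.2 = p.2

/-- The inapproximability-reduction instance `I'` built from a bipartite graph
`G` on `U = W = Fin n`, `n = 2m` even.  U-side agents: `u_i` (`inl i`), `w_i'`
(`inr (inl i)`), `z_j` (`inr (inr j)`); W-side agents: `w_i` (`inl i`), `u_j'`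
(`inr (inl j)`), `z_j'` (`inr (inr j)`).  Edges: `inl ⟨(i,j),_⟩` the edges of
`G`; `inr (inl i) = (w_i,w_i')`; `inr (inr (inl (i,j))) = (u_i,u_j')`;
`inr (inr (inr (inl j))) = (u_j',z_j)`; `inr (inr (inr (inr j))) = (z_j,z_j')`.
Preferences: `u_i: [V_G(u_i)] ≻ [U']`; `w_i: [V_G(w_i)] ≻ w_i'`; `w_i': w_i`;
`u_j': z_j ≻ [U]`; `z_j: u_j' ≻ z_j'`; `z_j': z_j` (brackets are ties). -/
noncomputable def inapx (m : ℕ) (G : Finset (Fin (2 * m) × Fin (2 * m))) :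
    PrefInst (Fin (2 * m) ⊕ Fin (2 * m) ⊕ Fin m) (Fin (2 * m) ⊕ Fin m ⊕ Fin m)
      ({p : Fin (2 * m) × Fin (2 * m) // p ∈ G} ⊕ Fin (2 * m) ⊕
        (Fin (2 * m) × Fin m) ⊕ Fin m ⊕ Fin m) where
  src := fun d =>
    match d with
    | Sum.inl p => Sum.inl p.1.1
    | Sum.inr (Sum.inl i) => Sum.inr (Sum.inl i)
    | Sum.inr (Sum.inr (Sum.inl (i, _))) => Sum.inl i
    | Sum.inr (Sum.inr (Sum.inr (Sum.inl j))) => Sum.inr (Sum.inr j)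
    | Sum.inr (Sum.inr (Sum.inr (Sum.inr j))) => Sum.inr (Sum.inr j)
  dst := fun d =>
    match d with
    | Sum.inl p => Sum.inl p.1.2
    | Sum.inr (Sum.inl i) => Sum.inl i
    | Sum.inr (Sum.inr (Sum.inl (_, j))) => Sum.inr (Sum.inl j)
    | Sum.inr (Sum.inr (Sum.inr (Sum.inl j))) => Sum.inr (Sum.inl j)
    | Sum.inr (Sum.inr (Sum.inr (Sum.inr j))) => Sum.inr (Sum.inr j)
  pU := fun v d =>
    match v, d with
    | Sum.inl i, Sum.inl p => if p.1.1 = i then 2 else 0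
    | Sum.inl i, Sum.inr (Sum.inr (Sum.inl (a, _))) => if a = i then 1 else 0
    | Sum.inl _, _ => 0
    | Sum.inr (Sum.inl i), Sum.inr (Sum.inl a) => if a = i then 1 else 0
    | Sum.inr (Sum.inl _), _ => 0
    | Sum.inr (Sum.inr j), Sum.inr (Sum.inr (Sum.inr (Sum.inl a))) =>
        if a = j then 2 else 0
    | Sum.inr (Sum.inr j), Sum.inr (Sum.inr (Sum.inr (Sum.inr a))) =>
        if a = j then 1 else 0
    | Sum.inr (Sum.inr _), _ => 0
  pW := fun v d =>
    match v, d with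
    | Sum.inl i, Sum.inl p => if p.1.2 = i then 2 else 0
    | Sum.inl i, Sum.inr (Sum.inl a) => if a = i then 1 else 0
    | Sum.inl _, _ => 0
    | Sum.inr (Sum.inl j), Sum.inr (Sum.inr (Sum.inr (Sum.inl a))) =>
        if a = j then 2 else 0
    | Sum.inr (Sum.inl j), Sum.inr (Sum.inr (Sum.inl (_, b))) =>
        if b = j then 1 else 0
    | Sum.inr (Sum.inl _), _ => 0
    | Sum.inr (Sum.inr j), Sum.inr (Sum.inr (Sum.inr (Sum.inr a))) =>
        if a = j then 1 else 0
    | Sum.inr (Sum.inr _), _ => 0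

end PrefInst

/-! The `G`-edges `K` of `M'` form the required matching.

Size: every edge of `M'` has its own endpoint on the side `{u_i} ∪ {w_i'} ∪ {z_j}` of `5m`
agents, and every `G`-edge `(u_i, w_j) ∈ M'` leaves the agent `w_j'` unmatched, so
`|M'| + |K| ≤ 5m`.

Maximality: if some `(u_i, w_j) ∈ G` met no edge of `K`, then `(u_i, w_j)`, together with
`(z_b, u_b')` when `u_i` is matched to `u_b'`, is a matching `S` of edges blocking `M'`. Switching
`S` into `M'` gives each endpoint of `S` a strictly better partner (two votes per edge of `S`
against `M'`), while every displaced edge of `M'` has an endpoint in `S` and so costs at most one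
vote; but fewer than `2|S|` edges of `M'` are displaced, so `M'` loses the comparison. -/

namespace PrefInst

variable {U W E : Type} {I : PrefInst U W E} {M N S D : Finset E} {u : U} {w : W} {e f : E}

def swap (I : PrefInst U W E) : PrefInst W U E := ⟨I.dst, I.src, I.pW, I.pU⟩

theorem isMatching_swap : I.swap.IsMatching M ↔ I.IsMatching M :=
  ⟨fun h e he f hf hne => (h e he f hf hne).symm, fun h e he f hf hne => (h e he f hf hne).symm⟩

namespace IsMatching

theorem eq_of_src (hM : I.IsMatching M) (he : e ∈ M) (hf : f ∈ M) (h : I.src e = I.src f) :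
    e = f :=
  by_contra fun hne => (hM e he f hf hne).1 h

theorem eq_of_dst (hM : I.IsMatching M) (he : e ∈ M) (hf : f ∈ M) (h : I.dst e = I.dst f) :
    e = f :=
  by_contra fun hne => (hM e he f hf hne).2 h

theorem injOn_src (hM : I.IsMatching M) : Set.InjOn I.src M :=
  fun _ he _ hf h => hM.eq_of_src he hf h

theorem mU_eq_some_iff [DecidableEq U] (hM : I.IsMatching M) :
    I.mU M u = some e ↔ e ∈ M ∧ I.src e = u := by
  constructor
  · intro h
    simpa using Finset.mem_toList.mp (List.mem_of_mem_head? h)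
  · rintro ⟨he, rfl⟩
    have : M.filter (fun f => I.src f = I.src e) = {e} := by
      ext f
      simp only [mem_filter, mem_singleton]
      exact ⟨fun ⟨hf, h⟩ => hM.eq_of_src hf he h, by rintro rfl; exact ⟨he, rfl⟩⟩
    simp [mU, this]

theorem valU_mU_lt [DecidableEq U] (hM : I.IsMatching M) {c : ℝ} (hc : 0 < c)
    (h : ∀ e ∈ M, I.src e = u → I.pU u e < c) : I.valU u (I.mU M u) < c := by
  cases hu : I.mU M u with
  | none => exact hc
  | some e => exact h e ((hM.mU_eq_some_iff.1 hu).1) ((hM.mU_eq_some_iff.1 hu).2)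

theorem valW_mW_lt [DecidableEq W] (hM : I.IsMatching M) {c : ℝ} (hc : 0 < c)
    (h : ∀ e ∈ M, I.dst e = w → I.pW w e < c) : I.valW w (I.mW M w) < c :=
  valU_mU_lt (I := I.swap) (isMatching_swap.2 hM) hc h

theorem blocks_of_lt [DecidableEq U] [DecidableEq W] (hM : I.IsMatching M)
    (hu : I.valU (I.src e) (I.mU M (I.src e)) < I.pU (I.src e) e)
    (hw : I.valW (I.dst e) (I.mW M (I.dst e)) < I.pW (I.dst e) e) : I.Blocks M e := by
  refine ⟨fun he => ?_, hu, hw⟩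
  rw [(hM.mU_eq_some_iff).2 ⟨he, rfl⟩] at hu
  exact lt_irrefl _ hu

theorem card_filter_dst_eq_le_one [DecidableEq W] (hM : I.IsMatching M) (w : W) :
    #(M.filter (I.dst · = w)) ≤ 1 :=
  card_le_one.2 fun _ ha _ hb => hM.eq_of_dst (mem_filter.1 ha).1 (mem_filter.1 hb).1
    ((mem_filter.1 ha).2.trans (mem_filter.1 hb).2.symm)

theorem card_filter_src_eq_le_one [DecidableEq U] (hM : I.IsMatching M) (u : U) :
    #(M.filter (I.src · = u)) ≤ 1 :=
  card_filter_dst_eq_le_one (I := I.swap) (isMatching_swap.2 hM) u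

end IsMatching

theorem isMatching_singleton : I.IsMatching {e} := by
  intro a ha b hb hne
  simp only [mem_singleton] at ha hb
  exact absurd (ha.trans hb.symm) hne

theorem isMatching_pair [DecidableEq E] (hsrc : I.src e ≠ I.src f) (hdst : I.dst e ≠ I.dst f) :
    I.IsMatching {e, f} := by
  intro a ha b hb hne
  simp only [mem_insert, mem_singleton] at ha hb
  rcases ha with rfl | rfl <;> rcases hb with rfl | rfl
  exacts [absurd rfl hne, ⟨hsrc, hdst⟩, ⟨hsrc.symm, hdst.symm⟩, absurd rfl hne]

theorem mU_congr [DecidableEq U] (h : ∀ e, I.src e = u → (e ∈ M ↔ e ∈ N)) :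
    I.mU M u = I.mU N u := by
  have : M.filter (fun e => I.src e = u) = N.filter (fun e => I.src e = u) := by
    ext e
    simp only [mem_filter]
    exact and_congr_left (h e)
  rw [mU, mU, this]

theorem wVoteU_le_one [DecidableEq U] [DecidableEq E] : I.wVoteU M N u ≤ 1 := by
  unfold wVoteU; split_ifs <;> norm_num

theorem wVoteU_eq_neg_one [DecidableEq U] [DecidableEq E]
    (h : I.valU u (I.mU M u) < I.valU u (I.mU N u)) : I.wVoteU M N u = -1 := by
  rw [wVoteU, if_neg fun heq => (heq ▸ h).false, if_pos h]

theorem sum_wVoteU_le [DecidableEq U] [DecidableEq E] [Fintype U] (hN : I.IsMatching N)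
    (hSN : S ⊆ N) (hS : I.IsMatching S)
    (himp : ∀ e ∈ S, I.valU (I.src e) (I.mU M (I.src e)) < I.pU (I.src e) e)
    (hchg : ∀ u ∉ S.image I.src, I.mU M u ≠ I.mU N u → u ∈ D.image I.src) :
    ∑ u, I.wVoteU M N u ≤ #(D.image I.src \ S.image I.src) - #S := by
  calc ∑ u, I.wVoteU M N u
      ≤ ∑ u, ((if u ∈ D.image I.src \ S.image I.src then 1 else 0) -
          (if u ∈ S.image I.src then 1 else 0) : ℤ) := by
        refine sum_le_sum fun u _ => ?_
        by_cases huS : u ∈ S.image I.src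
        · obtain ⟨e, he, rfl⟩ := mem_image.1 huS
          have hNe : I.mU N (I.src e) = some e := hN.mU_eq_some_iff.2 ⟨hSN he, rfl⟩
          rw [wVoteU_eq_neg_one (by rw [hNe]; exact himp e he)]
          simp [huS]
        · by_cases hsame : I.mU M u = I.mU N u
          · simp only [wVoteU, if_pos hsame, huS, if_false, sub_zero]
            positivity
          · simp [hchg u huS hsame, huS, wVoteU_le_one]
    _ = #(D.image I.src \ S.image I.src) - #S := by
        rw [sum_sub_distrib, sum_boole, sum_boole, filter_univ_mem, filter_univ_mem,
          card_image_of_injOn hS.injOn_src]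

theorem sum_wVoteW_le [DecidableEq W] [DecidableEq E] [Fintype W] (hN : I.IsMatching N)
    (hSN : S ⊆ N) (hS : I.IsMatching S)
    (himp : ∀ e ∈ S, I.valW (I.dst e) (I.mW M (I.dst e)) < I.pW (I.dst e) e)
    (hchg : ∀ w ∉ S.image I.dst, I.mW M w ≠ I.mW N w → w ∈ D.image I.dst) :
    ∑ w, I.wVoteW M N w ≤ #(D.image I.dst \ S.image I.dst) - #S :=
  sum_wVoteU_le (I := I.swap) (isMatching_swap.2 hN) hSN (isMatching_swap.2 hS) himp hchg

theorem card_image_src_sdiff_add_card_image_dst_sdiff_le [DecidableEq U] [DecidableEq W]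
    (hD : ∀ f ∈ D, I.src f ∈ S.image I.src ∨ I.dst f ∈ S.image I.dst) :
    #(D.image I.src \ S.image I.src) + #(D.image I.dst \ S.image I.dst) ≤ #D := by
  have hU : D.image I.src \ S.image I.src ⊆
      (D.filter fun f => I.src f ∉ S.image I.src).image I.src := by
    intro u hu
    obtain ⟨hu, huS⟩ := mem_sdiff.1 hu
    obtain ⟨f, hf, rfl⟩ := mem_image.1 hu
    exact mem_image_of_mem _ (mem_filter.2 ⟨hf, huS⟩)
  have hW : D.image I.dst \ S.image I.dst ⊆
      (D.filter fun f => I.src f ∈ S.image I.src).image I.dst := by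
    intro w hw
    obtain ⟨hw, hwS⟩ := mem_sdiff.1 hw
    obtain ⟨f, hf, rfl⟩ := mem_image.1 hw
    exact mem_image_of_mem _ (mem_filter.2 ⟨hf, (hD f hf).resolve_right hwS⟩)
  calc _ ≤ #(D.filter fun f => I.src f ∉ S.image I.src) +
        #(D.filter fun f => I.src f ∈ S.image I.src) :=
        add_le_add ((card_le_card hU).trans card_image_le) ((card_le_card hW).trans card_image_le)
    _ = #D := by rw [add_comm, card_filter_add_card_filter_not]

def displaced [DecidableEq U] [DecidableEq W] (I : PrefInst U W E) (M S : Finset E) : Finset E :=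
  M.filter fun f => ∃ e ∈ S, I.src f = I.src e ∨ I.dst f = I.dst e

theorem isMatching_sdiff_displaced_union [DecidableEq U] [DecidableEq W] [DecidableEq E]
    (hM : I.IsMatching M) (hS : I.IsMatching S) :
    I.IsMatching (M \ I.displaced M S ∪ S) := by
  intro e he f hf hne
  simp only [displaced, mem_union, mem_sdiff, mem_filter, not_and, not_exists, not_or] at he hf
  rcases he with ⟨heM, heD⟩ | heS <;> rcases hf with ⟨hfM, hfD⟩ | hfS
  · exact hM e heM f hfM hne
  · exact heD heM f hfS
  · exact (hfD hfM e heS).imp Ne.symm Ne.symm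
  · exact hS e heS f hfS hne

theorem WeaklyPopular.two_mul_card_le_card_displaced [DecidableEq U] [DecidableEq W]
    [DecidableEq E] [Fintype U] [Fintype W] (hM : I.IsMatching M) (hpop : I.WeaklyPopular M)
    (hS : I.IsMatching S) (hblock : ∀ e ∈ S, I.Blocks M e) :
    2 * #S ≤ #(I.displaced M S) := by
  set D := I.displaced M S
  have hN := isMatching_sdiff_displaced_union hM hS
  have hmem : ∀ e ∉ D, e ∉ S → (e ∈ M ↔ e ∈ M \ D ∪ S) := by
    intro e heD heS
    simp [heD, heS]
  have hU := sum_wVoteU_le (D := D) hN subset_union_right hS (fun e he => (hblock e he).2.1)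
    fun u huS hne => by_contra fun huD => hne <| mU_congr fun e hu =>
      hmem e (fun he => huD (hu ▸ mem_image_of_mem _ he))
        fun he => huS (hu ▸ mem_image_of_mem _ he)
  have hW := sum_wVoteW_le (D := D) hN subset_union_right hS (fun e he => (hblock e he).2.2)
    fun w hwS hne => by_contra fun hwD => hne <| mU_congr (I := I.swap) fun e hw =>
      hmem e (fun he => hwD (hw ▸ mem_image_of_mem _ he))
        fun he => hwS (hw ▸ mem_image_of_mem _ he)
  have hD := card_image_src_sdiff_add_card_image_dst_sdiff_le (I := I) (D := D) (S := S)
    fun f hf => by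
      obtain ⟨-, e, he, h | h⟩ := mem_filter.1 hf
      · exact Or.inl (mem_image.2 ⟨e, he, h.symm⟩)
      · exact Or.inr (mem_image.2 ⟨e, he, h.symm⟩)
  have := hpop _ hN
  omega

end PrefInst

namespace PrefInst

abbrev InapxEdge (m : ℕ) (G : Finset (Fin (2 * m) × Fin (2 * m))) : Type :=
  {p : Fin (2 * m) × Fin (2 * m) // p ∈ G} ⊕ Fin (2 * m) ⊕
    (Fin (2 * m) × Fin m) ⊕ Fin m ⊕ Fin m

variable {m : ℕ} {G : Finset (Fin (2 * m) × Fin (2 * m))} {M : Finset (InapxEdge m G)}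

noncomputable def gEdges (M : Finset (InapxEdge m G)) : Finset (Fin (2 * m) × Fin (2 * m)) :=
  (M.preimage Sum.inl Sum.inl_injective.injOn).map (Function.Embedding.subtype _)

theorem mem_gEdges {q : Fin (2 * m) × Fin (2 * m)} :
    q ∈ gEdges M ↔ ∃ h : q ∈ G, Sum.inl ⟨q, h⟩ ∈ M := by
  simp [gEdges]

theorem card_gEdges_add_card_le (hM : (inapx m G).IsMatching M) : #(gEdges M) + #M ≤ 5 * m := by
  let w' : Fin (2 * m) × Fin (2 * m) → Fin (2 * m) ⊕ Fin (2 * m) ⊕ Fin m :=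
    fun q => Sum.inr (Sum.inl q.2)
  have hinj : Set.InjOn w' (gEdges M) := by
    intro q hq q' hq' h
    obtain ⟨_, hqM⟩ := mem_gEdges.1 hq
    obtain ⟨_, hqM'⟩ := mem_gEdges.1 hq'
    have := hM.eq_of_dst hqM hqM' (congrArg Sum.inl (Sum.inl_injective (Sum.inr_injective h)))
    simpa using this
  have hdisj : Disjoint ((gEdges M).image w') (M.image (inapx m G).src) := by
    rw [disjoint_left]
    rintro _ hx he
    obtain ⟨q, hq, rfl⟩ := mem_image.1 hx
    obtain ⟨e, he, hsrc⟩ := mem_image.1 he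
    obtain ⟨_, hqM⟩ := mem_gEdges.1 hq
    rcases e with _ | a | _ | _ | _ <;> simp [inapx, w'] at hsrc
    subst hsrc
    exact absurd (hM.eq_of_dst he hqM rfl) (by simp)
  calc #(gEdges M) + #M = #((gEdges M).image w' ∪ M.image (inapx m G).src) := by
        rw [card_union_of_disjoint hdisj, card_image_of_injOn hinj,
          card_image_of_injOn hM.injOn_src]
    _ ≤ Fintype.card (Fin (2 * m) ⊕ Fin (2 * m) ⊕ Fin m) := card_le_univ _
    _ = 5 * m := by simp; ring

variable {i j : Fin (2 * m)}

theorem inapx_blocks_u_w (hM : (inapx m G).IsMatching M) (hp : (i, j) ∈ G)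
    (hfree : ∀ q ∈ gEdges M, q.1 ≠ i ∧ q.2 ≠ j) :
    (inapx m G).Blocks M (Sum.inl ⟨(i, j), hp⟩) := by
  have hu := hM.valU_mU_lt (u := Sum.inl i) two_pos <| by
    rintro (q | a | ⟨a, b⟩ | a | a) he hsrc <;> simp [inapx] at hsrc ⊢
    · exact absurd hsrc (hfree q.1 (mem_gEdges.2 ⟨q.2, he⟩)).1
    · simp [hsrc]
  have hw := hM.valW_mW_lt (w := Sum.inl j) two_pos <| by
    rintro (q | a | ⟨a, b⟩ | a | a) he hdst <;> simp [inapx] at hdst ⊢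
    · exact absurd hdst (hfree q.1 (mem_gEdges.2 ⟨q.2, he⟩)).2
    · simp [hdst]
  exact hM.blocks_of_lt (by simpa [inapx] using hu) (by simpa [inapx] using hw)

theorem inapx_blocks_z_u' (hM : (inapx m G).IsMatching M) {b : Fin m}
    (hc : Sum.inr (Sum.inr (Sum.inl (i, b))) ∈ M) :
    (inapx m G).Blocks M (Sum.inr (Sum.inr (Sum.inr (Sum.inl b)))) := by
  have hu := hM.valU_mU_lt (u := Sum.inr (Sum.inr b)) two_pos <| by
    rintro (q | a | ⟨a, b⟩ | a | a) he hsrc <;> simp [inapx] at hsrc ⊢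
    · subst hsrc
      exact absurd (hM.eq_of_dst he hc rfl) (by simp)
    · simp [hsrc]
  have hw := hM.valW_mW_lt (w := Sum.inr (Sum.inl b)) two_pos fun e he hdst => by
    rw [hM.eq_of_dst he hc hdst]
    simp [inapx]
  exact hM.blocks_of_lt (by simpa [inapx] using hu) (by simpa [inapx] using hw)

theorem inapx_card_displaced_u_w_le_one (hM : (inapx m G).IsMatching M) (hp : (i, j) ∈ G)
    (hc : (inapx m G).mU M (Sum.inl i) = none) :
    #((inapx m G).displaced M {Sum.inl ⟨(i, j), hp⟩}) ≤ 1 := by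
  refine (card_le_card fun f hf => ?_).trans (hM.card_filter_dst_eq_le_one (Sum.inl j))
  obtain ⟨hfM, e, he, hsrc | hdst⟩ := mem_filter.1 hf <;> rw [mem_singleton] at he <;> subst he
  · cases hc.symm.trans (hM.mU_eq_some_iff.2 ⟨hfM, hsrc⟩)
  · exact mem_filter.2 ⟨hfM, hdst⟩

theorem inapx_card_displaced_u_w_z_u'_le_three (hM : (inapx m G).IsMatching M) (hp : (i, j) ∈ G)
    {b : Fin m} (hc : Sum.inr (Sum.inr (Sum.inl (i, b))) ∈ M) :
    #((inapx m G).displaced M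
      {Sum.inl ⟨(i, j), hp⟩, Sum.inr (Sum.inr (Sum.inr (Sum.inl b)))}) ≤ 3 := by
  set Dw := M.filter ((inapx m G).dst · = Sum.inl j)
  set Dz := M.filter ((inapx m G).src · = Sum.inr (Sum.inr b))
  have hD : (inapx m G).displaced M
      {Sum.inl ⟨(i, j), hp⟩, Sum.inr (Sum.inr (Sum.inr (Sum.inl b)))} ⊆
      insert (Sum.inr (Sum.inr (Sum.inl (i, b)))) (Dw ∪ Dz) := by
    intro f hf
    obtain ⟨hfM, e, he, hsh⟩ := mem_filter.1 hf
    simp only [mem_insert, mem_singleton] at he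
    rcases he with rfl | rfl <;> rcases hsh with h | h
    · exact mem_insert.2 (Or.inl (hM.eq_of_src hfM hc h))
    · exact mem_insert_of_mem (mem_union_left _ (mem_filter.2 ⟨hfM, h⟩))
    · exact mem_insert_of_mem (mem_union_right _ (mem_filter.2 ⟨hfM, h⟩))
    · exact mem_insert.2 (Or.inl (hM.eq_of_dst hfM hc h))
  have := card_insert_le (Sum.inr (Sum.inr (Sum.inl (i, b)))) (Dw ∪ Dz)
  have := card_union_le Dw Dz
  have : #Dw ≤ 1 := hM.card_filter_dst_eq_le_one _
  have : #Dz ≤ 1 := hM.card_filter_src_eq_le_one _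
  have := card_le_card hD
  omega

theorem WeaklyPopular.exists_mem_gEdges_adj (hM : (inapx m G).IsMatching M)
    (hpop : (inapx m G).WeaklyPopular M) (hp : (i, j) ∈ G) :
    ∃ q ∈ gEdges M, q.1 = i ∨ q.2 = j := by
  by_contra! hfree
  have hg := inapx_blocks_u_w hM hp hfree
  cases hc : (inapx m G).mU M (Sum.inl i) with
  | none =>
    have := hpop.two_mul_card_le_card_displaced hM isMatching_singleton (by simpa using hg)
    have := inapx_card_displaced_u_w_le_one hM hp hc
    simp only [card_singleton] at *
    omega
  | some c =>
    obtain ⟨hcM, hcsrc⟩ := hM.mU_eq_some_iff.1 hc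
    -- `c = (u_i, u_b')`: the switch then also moves `z_b` to `u_b'`.
    obtain ⟨b, rfl⟩ : ∃ b : Fin m, c = Sum.inr (Sum.inr (Sum.inl (i, b))) := by
      rcases c with q | a | ⟨a, b⟩ | a | a <;> simp [inapx] at hcsrc
      · exact absurd hcsrc (hfree q.1 (mem_gEdges.2 ⟨q.2, hcM⟩)).1
      · exact ⟨b, by rw [hcsrc]⟩
    have := hpop.two_mul_card_le_card_displaced hM
      (isMatching_pair (I := inapx m G) (e := Sum.inl ⟨(i, j), hp⟩)
        (f := Sum.inr (Sum.inr (Sum.inr (Sum.inl b)))) (by simp [inapx]) (by simp [inapx]))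
      (by simpa using ⟨hg, inapx_blocks_z_u' hM hcM⟩)
    have := inapx_card_displaced_u_w_z_u'_le_three hM hp hcM
    rw [card_pair (by simp)] at *
    omega

theorem isMaximalMatchingOf_gEdges (hM : (inapx m G).IsMatching M)
    (hpop : (inapx m G).WeaklyPopular M) : IsMaximalMatchingOf G (gEdges M) := by
  refine ⟨fun q hq => (mem_gEdges.1 hq).1, fun p hp q hq hne => ?_,
    fun p hp => hpop.exists_mem_gEdges_adj hM hp⟩
  obtain ⟨_, hpM⟩ := mem_gEdges.1 hp
  obtain ⟨_, hqM⟩ := mem_gEdges.1 hq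
  simpa [inapx] using hM _ hpM _ hqM (by simpa using hne)

end PrefInst

open PrefInst in
theorem inapx_weakly_popular_gives_maximal_general
    (m k : ℕ) (G : Finset (Fin (2 * m) × Fin (2 * m)))
    (M' : Finset ({p : Fin (2 * m) × Fin (2 * m) // p ∈ G} ⊕ Fin (2 * m) ⊕
      (Fin (2 * m) × Fin m) ⊕ Fin m ⊕ Fin m))
    (hM' : (inapx m G).IsMatching M')
    (hpop : (inapx m G).WeaklyPopular M')
    (hcard : 5 * m - k ≤ M'.card) :
    ∃ K, IsMaximalMatchingOf G K ∧ K.card ≤ k := by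
  have := card_gEdges_add_card_le hM'
  exact ⟨gEdges M', isMaximalMatchingOf_gEdges hM' hpop, by omega⟩

open PrefInst in
/-- If the reduction instance `I'` has a weakly popular matching of
size at least `(5/2)n − k = 5m − k` (with `k ≥ n/2 = m`), then `G` has a maximal
matching of size at most `k`. -/
theorem inapx_weakly_popular_gives_maximal
    (m k : ℕ) (G : Finset (Fin (2 * m) × Fin (2 * m))) (hk : m ≤ k)
    (M' : Finset ({p : Fin (2 * m) × Fin (2 * m) // p ∈ G} ⊕ Fin (2 * m) ⊕
      (Fin (2 * m) × Fin m) ⊕ Fin m ⊕ Fin m))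
    (hM' : (inapx m G).IsMatching M')
    (hpop : (inapx m G).WeaklyPopular M')
    (hcard : 5 * m - k ≤ M'.card) :
    ∃ K, IsMaximalMatchingOf G K ∧ K.card ≤ k :=
  inapx_weakly_popular_gives_maximal_general m k G M' hM' hpop hcard
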